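/- Consider the DPS decomposition with linking constraints only. If for some partition (p_q)_{q=1..k} of b_{[L^row]} satisfying Σ_q p_q = b_{[L^row]}, each subproblem q has a feasible solution x^q with zero slack (z_q = 0), then the concatenated vector x defined by x_{[D_q^col]} = x^q_{[D_q^col]} satisfies all original constraints, i.e., A x ≥ b, assuming the blocks D_q^col partition all columns and the row blocks D_q^row together with L^row partition all rows. -/
import Mathlib


/-- DPS: if each subproblem is feasible with zero slack for a partition
`(p_q)` of the linking right-hand sides, the concatenated vector is feasible
for the original problem `A x ≥ b`. -/
theorem dps_concatenation_feasible (m n k : ℕ) (A : Matrix (Fin m) (Fin n) ℝ)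
    (b : Fin m → ℝ)
    (Drow : Fin k → Finset (Fin m)) (Lrow : Finset (Fin m))
    (Dcol : Fin k → Finset (Fin n))
    -- columns are partitioned by the blocks
    (hcol : ∀ j : Fin n, ∃! q : Fin k, j ∈ Dcol q)
    -- rows are partitioned into the blocks and the linking rows
    (hrowcover : ∀ i : Fin m, i ∈ Lrow ∨ ∃ q, i ∈ Drow q)
    (hrowdisj : ∀ (q : Fin k) (i : Fin m), i ∈ Lrow → i ∉ Drow q)
    (hrowblocks : ∀ (q₁ q₂ : Fin k) (i : Fin m), i ∈ Drow q₁ → i ∈ Drow q₂ → q₁ = q₂)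
    -- decomposition property: nonzero entries only within a block or linking rows
    (hdec : ∀ (q₁ q₂ : Fin k) (i : Fin m) (j : Fin n),
      i ∈ Drow q₁ → j ∈ Dcol q₂ → A i j ≠ 0 → q₁ = q₂)
    -- partition of the linking right-hand side
    (p : Fin k → Fin m → ℝ)
    (hpart : ∀ i ∈ Lrow, ∑ q, p q i = b i)
    -- subproblem solutions with zero slack
    (xq : Fin k → Fin n → ℝ)
    (hblock : ∀ q : Fin k, ∀ i ∈ Drow q, b i ≤ ∑ j ∈ Dcol q, A i j * xq q j)
    (hlink : ∀ q : Fin k, ∀ i ∈ Lrow, p q i ≤ ∑ j ∈ Dcol q, A i j * xq q j)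
    -- concatenated vector
    (x : Fin n → ℝ) (hx : ∀ (q : Fin k), ∀ j ∈ Dcol q, x j = xq q j) :
    ∀ i : Fin m, b i ≤ ∑ j, A i j * x j := by
  intro i
  -- classification function for columns
  classical
  set cls : Fin n → Fin k := fun j => (hcol j).choose with hcls
  have hclsmem : ∀ j, j ∈ Dcol (cls j) := fun j => (hcol j).choose_spec.1
  have hclseq : ∀ q j, j ∈ Dcol q → cls j = q := fun q j hj =>
    ((hcol j).choose_spec.2 q hj).symm
  have hfilter : ∀ q : Fin k,
      (Finset.univ.filter fun j => cls j = q) = Dcol q := by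
    intro q
    ext j
    simp only [Finset.mem_filter, Finset.mem_univ, true_and]
    constructor
    · rintro rfl; exact hclsmem j
    · exact hclseq q j
  have hsplit : ∀ g : Fin n → ℝ,
      ∑ j, g j = ∑ q, ∑ j ∈ Dcol q, g j := by
    intro g
    rw [← Finset.sum_fiberwise Finset.univ cls g]
    exact Finset.sum_congr rfl fun q _ => by rw [hfilter]
  rcases hrowcover i with hL | ⟨q, hq⟩
  · -- linking row
    calc b i = ∑ q, p q i := (hpart i hL).symm
      _ ≤ ∑ q, ∑ j ∈ Dcol q, A i j * xq q j :=
          Finset.sum_le_sum fun q _ => hlink q i hL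
      _ = ∑ q, ∑ j ∈ Dcol q, A i j * x j :=
          Finset.sum_congr rfl fun q _ => Finset.sum_congr rfl fun j hj => by
            rw [hx q j hj]
      _ = ∑ j, A i j * x j := (hsplit _).symm
  · -- block row
    have hzero : ∀ q' : Fin k, q' ≠ q → ∀ j ∈ Dcol q', A i j * x j = 0 := by
      intro q' hne j hj
      by_cases hA : A i j = 0
      · rw [hA, zero_mul]
      · exact absurd ((hdec q q' i j hq hj hA).symm) hne
    calc b i ≤ ∑ j ∈ Dcol q, A i j * xq q j := hblock q i hq
      _ = ∑ j ∈ Dcol q, A i j * x j :=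
          Finset.sum_congr rfl fun j hj => by rw [hx q j hj]
      _ = ∑ q', ∑ j ∈ Dcol q', A i j * x j := by
          rw [Finset.sum_eq_single q]
          · intro q' _ hne
            exact Finset.sum_eq_zero (hzero q' hne)
          · intro h; exact absurd (Finset.mem_univ q) h
      _ = ∑ j, A i j * x j := (hsplit _).symm
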